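/- For every finite graph G and every integer d ≥ 1, the treedepth of G is at most d times the d-fold vertex cover number of G, i.e., td(G) ≤ d · vc_d(G). -/

import Mathlib

/-- A rooted forest on a vertex type `V`, given by a parent function.
Well-foundedness guarantees that following parents from any vertex
eventually reaches a root (a vertex with no parent). -/
structure RootedForest (V : Type) where
  parent : V → Option V
  wf : WellFounded (fun a b => parent b = some a)

namespace RootedForest

/-- The depth of a vertex: the number of vertices on the path from its root to it. -/
noncomputable def depth {V : Type} (F : RootedForest V) : V → ℕ :=
  F.wf.fix (fun v ih =>
    match h : F.parent v with
    | none => 1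
    | some p => ih p h + 1)

/-- `F.anc u v` means that `u` is an ancestor of `v` in `F` (possibly `u = v`). -/
def anc {V : Type} (F : RootedForest V) (u v : V) : Prop :=
  Relation.ReflTransGen (fun a b => F.parent a = some b) v u

end RootedForest

/-- The depth of a rooted forest: the maximum number of vertices on a root-to-leaf path. -/
noncomputable def forestDepth {V : Type} (F : RootedForest V) : ℕ := ⨆ v, F.depth v

/-- `F` is an elimination forest of `G`: for every edge of `G`, one endpoint is an
ancestor of the other. -/
def IsElimForest {V : Type} (G : SimpleGraph V) (F : RootedForest V) : Prop :=
  ∀ u v, G.Adj u v → F.anc u v ∨ F.anc v u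

/-- The treedepth of a graph: the minimum depth of an elimination forest. -/
noncomputable def treedepth {V : Type} (G : SimpleGraph V) : ℕ :=
  sInf {d : ℕ | ∃ F : RootedForest V, IsElimForest G F ∧ forestDepth F ≤ d}

/-- The `d`-fold vertex cover number of a graph. `vcFold 1 V G = |V(G)|`, and for `d ≥ 2`,
`vcFold d V G` is the least `k` such that there is a vertex set `U` with `|U| ≤ k` all of
whose removal leaves connected components of `(d-1)`-fold vertex cover number at most `k`. -/
noncomputable def vcFold : (d : ℕ) → (V : Type) → SimpleGraph V → ℕ
  | 0, _, _ => 0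
  | 1, V, _ => Nat.card V
  | d + 2, V, G => sInf {k : ℕ | ∃ U : Set V, Nat.card U ≤ k ∧
      ∀ c : (G.induce Uᶜ).ConnectedComponent,
        vcFold (d + 1) c.supp ((G.induce Uᶜ).induce c.supp) ≤ k}
namespace TDAux

variable {V : Type}

theorem depth_none (F : RootedForest V) {v : V} (h : F.parent v = none) :
    F.depth v = 1 := by
  rw [RootedForest.depth, WellFounded.fix_eq]; split <;> simp_all

theorem depth_some (F : RootedForest V) {v p : V} (h : F.parent v = some p) :
    F.depth v = F.depth p + 1 := by
  rw [RootedForest.depth, WellFounded.fix_eq]; split <;> simp_all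
  subst h; rfl

theorem one_le_depth (F : RootedForest V) (v : V) : 1 ≤ F.depth v := by
  cases h : F.parent v with
  | none => rw [depth_none F h]
  | some p => rw [depth_some F h]; omega

theorem depth_lt (F : RootedForest V) {v p : V} (h : F.parent v = some p) :
    F.depth p < F.depth v := by rw [depth_some F h]; omega

theorem forestDepth_le {F : RootedForest V} {n : ℕ} (h : ∀ v, F.depth v ≤ n) :
    forestDepth F ≤ n := ciSup_le' h

theorem depth_le_forestDepth [Finite V] (F : RootedForest V) (v : V) :
    F.depth v ≤ forestDepth F :=
  le_ciSup (Set.Finite.bddAbove (Set.finite_range _)) v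

theorem treedepth_le {G : SimpleGraph V} {n : ℕ}
    (h : ∃ F : RootedForest V, IsElimForest G F ∧ forestDepth F ≤ n) :
    treedepth G ≤ n := Nat.sInf_le h


section Glue

attribute [local instance] Classical.propDecidable

variable {V : Type} (U : Set V) {k : ℕ} (e : ↑U ≃ Fin k) (F' : RootedForest ↑(Uᶜ : Set V))

noncomputable def gp : V → Option V := fun v =>
  if hv : v ∈ U then
    if h0 : (e ⟨v, hv⟩ : ℕ) = 0 then none
    else some ↑(e.symm ⟨(e ⟨v, hv⟩ : ℕ) - 1,
      lt_of_le_of_lt (Nat.sub_le _ _) (e ⟨v, hv⟩).isLt⟩)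
  else
    match F'.parent ⟨v, hv⟩ with
    | some p => some ↑p
    | none =>
      if hk : k = 0 then none
      else some ↑(e.symm ⟨k - 1, Nat.sub_lt (Nat.pos_of_ne_zero hk) one_pos⟩)

noncomputable def gr : V → ℕ := fun v =>
  if hv : v ∈ U then (e ⟨v, hv⟩ : ℕ) else k + F'.depth ⟨v, hv⟩

theorem gr_lt {a b : V} (h : gp U e F' b = some a) : gr U e F' a < gr U e F' b := by
  unfold gp at h
  by_cases hb : b ∈ U
  · rw [dif_pos hb] at h
    by_cases h0 : (e ⟨b, hb⟩ : ℕ) = 0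
    · rw [dif_pos h0] at h; exact absurd h (by simp)
    · rw [dif_neg h0] at h
      have ha : a = ↑(e.symm ⟨(e ⟨b, hb⟩ : ℕ) - 1, _⟩) := (Option.some_inj.mp h).symm
      subst ha
      unfold gr
      rw [dif_pos hb, dif_pos (e.symm _).2, Equiv.apply_symm_apply]
      simp only
      omega
  · rw [dif_neg hb] at h
    unfold gr
    rw [dif_neg hb]
    cases hp : F'.parent ⟨b, hb⟩ with
    | some p =>
      rw [hp] at h
      have ha : a = ↑p := (Option.some_inj.mp h).symm
      subst ha
      have hpU : (↑p : V) ∉ U := p.2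
      rw [dif_neg hpU, Subtype.coe_eta]
      have := depth_lt F' hp
      omega
    | none =>
      rw [hp] at h
      by_cases hk : k = 0
      · rw [dif_pos hk] at h; exact absurd h (by simp)
      · rw [dif_neg hk] at h
        have ha : a = ↑(e.symm ⟨k - 1, _⟩) := (Option.some_inj.mp h).symm
        subst ha
        rw [dif_pos (e.symm _).2, Equiv.apply_symm_apply]
        have := one_le_depth F' ⟨b, hb⟩
        simp only
        omega

noncomputable def glueF : RootedForest V where
  parent := gp U e F'
  wf := Subrelation.wf (fun h => gr_lt U e F' h)
    (InvImage.wf (gr U e F') Nat.lt_wfRel.wf)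

theorem parent_of_U_zero (u : ↑U) (h0 : (e u : ℕ) = 0) :
    (glueF U e F').parent ↑u = none := by
  show gp U e F' ↑u = none
  unfold gp
  rw [dif_pos u.2]; rw [dif_pos h0]

theorem parent_of_U (u : ↑U) (h0 : (e u : ℕ) ≠ 0) :
    ∃ w : ↑U, (e w : ℕ) + 1 = (e u : ℕ) ∧ (glueF U e F').parent ↑u = some ↑w := by
  have hlt : (e u : ℕ) - 1 < k := lt_of_le_of_lt (Nat.sub_le _ _) (e u).isLt
  refine ⟨e.symm ⟨(e u : ℕ) - 1, hlt⟩, by rw [Equiv.apply_symm_apply]; simp; omega, ?_⟩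
  show gp U e F' ↑u = _
  unfold gp
  rw [dif_pos u.2, dif_neg h0]

theorem parent_of_c (x : ↑(Uᶜ : Set V)) {p : ↑(Uᶜ : Set V)} (hp : F'.parent x = some p) :
    (glueF U e F').parent ↑x = some ↑p := by
  show gp U e F' ↑x = _
  unfold gp
  have hx : (↑x : V) ∉ U := x.2
  rw [dif_neg hx, hp]

theorem parent_of_c_root_zero (x : ↑(Uᶜ : Set V)) (hp : F'.parent x = none) (hk : k = 0) :
    (glueF U e F').parent ↑x = none := by
  show gp U e F' ↑x = none
  unfold gp
  have hx : (↑x : V) ∉ U := x.2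
  rw [dif_neg hx, hp]
  simp [hk]

theorem parent_of_c_root (x : ↑(Uᶜ : Set V)) (hp : F'.parent x = none) (hk : k ≠ 0) :
    ∃ w : ↑U, (e w : ℕ) = k - 1 ∧ (glueF U e F').parent ↑x = some ↑w := by
  refine ⟨e.symm ⟨k - 1, Nat.sub_lt (Nat.pos_of_ne_zero hk) one_pos⟩,
    by rw [Equiv.apply_symm_apply], ?_⟩
  show gp U e F' ↑x = _
  unfold gp
  have hx : (↑x : V) ∉ U := x.2
  rw [dif_neg hx, hp]
  simp [hk]

theorem glue_depth_U : ∀ (n : ℕ) (u : ↑U), (e u : ℕ) = n →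
    (glueF U e F').depth ↑u ≤ n + 1 := by
  intro n
  induction n with
  | zero =>
    intro u hu
    rw [depth_none _ (parent_of_U_zero U e F' u hu)]
  | succ n ih =>
    intro u hu
    obtain ⟨w, hw, hp⟩ := parent_of_U U e F' u (by omega)
    rw [depth_some _ hp]
    have := ih w (by omega)
    omega

theorem glue_depth_c : ∀ x : ↑(Uᶜ : Set V),
    (glueF U e F').depth ↑x ≤ k + F'.depth x := by
  intro x
  induction x using F'.wf.induction with
  | _ x ih =>
    cases hp : F'.parent x with
    | some p =>
      rw [depth_some _ (parent_of_c U e F' x hp), depth_some F' hp]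
      have := ih p hp
      omega
    | none =>
      by_cases hk : k = 0
      · rw [depth_none _ (parent_of_c_root_zero U e F' x hp hk)]
        have := one_le_depth F' x
        omega
      · obtain ⟨w, hw, hpar⟩ := parent_of_c_root U e F' x hp hk
        rw [depth_some _ hpar]
        have h1 := glue_depth_U U e F' (k - 1) w hw
        have := one_le_depth F' x
        omega

theorem glue_anc_UU : ∀ (n : ℕ) (u w : ↑U), (e w : ℕ) + n = (e u : ℕ) →
    (glueF U e F').anc ↑w ↑u := by
  intro n
  induction n with
  | zero =>
    intro u w h
    have : w = u := e.injective (Fin.ext (by omega))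
    subst this
    exact Relation.ReflTransGen.refl
  | succ n ih =>
    intro u w h
    obtain ⟨w', hw', hp⟩ := parent_of_U U e F' u (by omega)
    exact Relation.ReflTransGen.head hp (ih w' w (by omega))

theorem glue_anc_last (hk : k ≠ 0) : ∀ x : ↑(Uᶜ : Set V),
    ∃ w : ↑U, (e w : ℕ) = k - 1 ∧ (glueF U e F').anc ↑w ↑x := by
  intro x
  induction x using F'.wf.induction with
  | _ x ih =>
    cases hp : F'.parent x with
    | some p =>
      obtain ⟨w, hw, hanc⟩ := ih p hp
      exact ⟨w, hw, Relation.ReflTransGen.head (parent_of_c U e F' x hp) hanc⟩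
    | none =>
      obtain ⟨w, hw, hpar⟩ := parent_of_c_root U e F' x hp hk
      exact ⟨w, hw, Relation.ReflTransGen.single hpar⟩

theorem glue_anc_Uc (u : ↑U) (x : ↑(Uᶜ : Set V)) : (glueF U e F').anc ↑u ↑x := by
  have hk : k ≠ 0 := by
    intro h
    subst h
    exact (e u).elim0
  obtain ⟨w, hw, hanc⟩ := glue_anc_last U e F' hk x
  have h2 : (glueF U e F').anc ↑u ↑w := by
    refine glue_anc_UU U e F' ((e w : ℕ) - (e u : ℕ)) w u ?_
    have := (e u).isLt
    omega
  exact Relation.ReflTransGen.trans hanc h2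

theorem glue_anc_lift {x y : ↑(Uᶜ : Set V)} (h : F'.anc x y) :
    (glueF U e F').anc ↑x ↑y :=
  Relation.ReflTransGen.lift Subtype.val (fun a b hab => parent_of_c U e F' a hab) _ _ h

include e in
theorem glueB [Finite V] (G : SimpleGraph V) (m : ℕ)
    (hElim : IsElimForest (G.induce Uᶜ) F') (hDep : ∀ x, F'.depth x ≤ m) :
    ∃ F : RootedForest V, IsElimForest G F ∧ forestDepth F ≤ k + m := by
  refine ⟨glueF U e F', ?_, ?_⟩
  · intro u v hadj
    by_cases hu : u ∈ U
    · by_cases hv : v ∈ U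
      · rcases le_total (e ⟨u, hu⟩ : ℕ) (e ⟨v, hv⟩ : ℕ) with h | h
        · exact Or.inl (glue_anc_UU U e F' ((e ⟨v, hv⟩ : ℕ) - (e ⟨u, hu⟩ : ℕ))
            ⟨v, hv⟩ ⟨u, hu⟩ (by omega))
        · exact Or.inr (glue_anc_UU U e F' ((e ⟨u, hu⟩ : ℕ) - (e ⟨v, hv⟩ : ℕ))
            ⟨u, hu⟩ ⟨v, hv⟩ (by omega))
      · exact Or.inl (glue_anc_Uc U e F' ⟨u, hu⟩ ⟨v, hv⟩)
    · by_cases hv : v ∈ U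
      · exact Or.inr (glue_anc_Uc U e F' ⟨v, hv⟩ ⟨u, hu⟩)
      · have hadj' : (G.induce Uᶜ).Adj ⟨u, hu⟩ ⟨v, hv⟩ := hadj
        rcases hElim _ _ hadj' with h | h
        · exact Or.inl (glue_anc_lift U e F' h)
        · exact Or.inr (glue_anc_lift U e F' h)
  · apply forestDepth_le
    intro v
    by_cases hv : v ∈ U
    · have h1 := glue_depth_U U e F' (e ⟨v, hv⟩ : ℕ) ⟨v, hv⟩ rfl
      have := (e ⟨v, hv⟩).isLt
      have : (glueF U e F').depth ↑(⟨v, hv⟩ : ↑U) = (glueF U e F').depth v := rfl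
      omega
    · have h1 := glue_depth_c U e F' ⟨v, hv⟩
      have h2 := hDep ⟨v, hv⟩
      have : (glueF U e F').depth ↑(⟨v, hv⟩ : ↑(Uᶜ : Set V)) = (glueF U e F').depth v := rfl
      omega

end Glue

section Union

open SimpleGraph

variable {W : Type} (H : SimpleGraph W)
  (P : ∀ c : H.ConnectedComponent, RootedForest ↑c.supp)

noncomputable def cp : W → Option W := fun w =>
  Option.map Subtype.val ((P (H.connectedComponentMk w)).parent ⟨w, rfl⟩)

noncomputable def cr : W → ℕ := fun w =>
  (P (H.connectedComponentMk w)).depth ⟨w, rfl⟩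

theorem cp_eq (c : H.ConnectedComponent) (x : ↑c.supp) :
    cp H P ↑x = Option.map Subtype.val ((P c).parent x) := by
  obtain ⟨x, hx⟩ := x
  obtain rfl := (SimpleGraph.ConnectedComponent.mem_supp_iff _ _).mp hx
  rfl

theorem cr_eq (c : H.ConnectedComponent) (x : ↑c.supp) :
    cr H P ↑x = (P c).depth x := by
  obtain ⟨x, hx⟩ := x
  obtain rfl := (SimpleGraph.ConnectedComponent.mem_supp_iff _ _).mp hx
  rfl

theorem cr_lt {a b : W} (h : cp H P b = some a) : cr H P a < cr H P b := by
  set c := H.connectedComponentMk b with hc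
  have hb : (⟨b, rfl⟩ : ↑c.supp) = ⟨b, rfl⟩ := rfl
  cases hp : (P c).parent ⟨b, rfl⟩ with
  | none => rw [cp, hp] at h; exact absurd h (by simp)
  | some y =>
    rw [cp, hp] at h
    simp only [Option.map_some] at h
    have ha : a = ↑y := (Option.some_inj.mp h).symm
    subst ha
    rw [cr_eq H P c y]
    have h2 : cr H P b = (P c).depth ⟨b, rfl⟩ := rfl
    rw [h2]
    exact depth_lt _ hp

noncomputable def unionF : RootedForest W where
  parent := cp H P
  wf := Subrelation.wf (fun h => cr_lt H P h) (InvImage.wf (cr H P) Nat.lt_wfRel.wf)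

theorem union_parent_some (c : H.ConnectedComponent) {x y : ↑c.supp}
    (h : (P c).parent x = some y) : (unionF H P).parent ↑x = some ↑y := by
  show cp H P ↑x = _
  rw [cp_eq H P c x, h]
  rfl

theorem union_depth (c : H.ConnectedComponent) : ∀ x : ↑c.supp,
    (unionF H P).depth ↑x ≤ (P c).depth x := by
  intro x
  induction x using (P c).wf.induction with
  | _ x ih =>
    cases hp : (P c).parent x with
    | none =>
      have hnone : (unionF H P).parent ↑x = none := by
        show cp H P ↑x = none
        rw [cp_eq H P c x, hp]
        rfl
      rw [depth_none _ hnone]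
      exact one_le_depth _ _
    | some y =>
      rw [depth_some _ (union_parent_some H P c hp), depth_some _ hp]
      have := ih y hp
      omega

theorem union_anc (c : H.ConnectedComponent) {x y : ↑c.supp} (h : (P c).anc x y) :
    (unionF H P).anc ↑x ↑y :=
  Relation.ReflTransGen.lift Subtype.val
    (fun a b hab => union_parent_some H P c hab) _ _ h

theorem unionForest [Finite W] (m : ℕ)
    (h : ∀ c : H.ConnectedComponent, ∃ F : RootedForest ↑c.supp,
      IsElimForest (H.induce c.supp) F ∧ forestDepth F ≤ m) :
    ∃ F : RootedForest W, IsElimForest H F ∧ ∀ w, F.depth w ≤ m := by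
  choose P hPe hPd using h
  refine ⟨unionF H P, ?_, ?_⟩
  · intro u v hadj
    have hr : H.connectedComponentMk u = H.connectedComponentMk v :=
      SimpleGraph.ConnectedComponent.sound hadj.reachable
    set c := H.connectedComponentMk u with hc
    have hx : u ∈ c.supp := rfl
    have hy : v ∈ c.supp := hr.symm
    have hadj' : (H.induce c.supp).Adj ⟨u, hx⟩ ⟨v, hy⟩ := hadj
    rcases hPe c _ _ hadj' with h | h
    · exact Or.inl (union_anc H P c h)
    · exact Or.inr (union_anc H P c h)
  · intro w
    set c := H.connectedComponentMk w with hc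
    have h1 := union_depth H P c ⟨w, rfl⟩
    have h2 := depth_le_forestDepth (P c) ⟨w, rfl⟩
    have h3 := hPd c
    calc (unionF H P).depth w ≤ (P c).depth ⟨w, rfl⟩ := h1
    _ ≤ m := h2.trans h3

end Union

section Top

variable {V : Type}

/-- The trivial forest: everything is a root. -/
def trivF (V : Type) : RootedForest V where
  parent := fun _ => none
  wf := ⟨fun x => Acc.intro x (fun _ h => by simp at h)⟩

theorem exists_elim_forest [Finite V] (G : SimpleGraph V) :
    ∃ F : RootedForest V, IsElimForest G F ∧ forestDepth F ≤ Nat.card V := by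
  haveI : IsEmpty ↑((Set.univ : Set V)ᶜ) := ⟨fun x => x.2 (Set.mem_univ ↑x)⟩
  have h := glueB (V := V) Set.univ (Finite.equivFin ↑(Set.univ : Set V))
    (trivF ↑((Set.univ : Set V)ᶜ)) G 0
    (fun u _ _ => isEmptyElim u) (fun x => isEmptyElim x)
  rwa [Nat.card_univ, Nat.add_zero] at h

theorem exists_forest_of_td [Finite V] {G : SimpleGraph V} {m : ℕ}
    (h : treedepth G ≤ m) :
    ∃ F : RootedForest V, IsElimForest G F ∧ forestDepth F ≤ m := by
  have hne : {d : ℕ | ∃ F : RootedForest V, IsElimForest G F ∧ forestDepth F ≤ d}.Nonempty :=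
    ⟨Nat.card V, exists_elim_forest G⟩
  obtain ⟨F, hF, hd⟩ := Nat.sInf_mem hne
  exact ⟨F, hF, hd.trans h⟩

end Top


theorem auxMain : ∀ (d : ℕ) (V : Type) [Fintype V] (G : SimpleGraph V),
    treedepth G ≤ (d + 1) * vcFold (d + 1) V G := by
  intro d
  induction d with
  | zero =>
    intro V _ G
    have : vcFold 1 V G = Nat.card V := rfl
    simpa [this] using treedepth_le (exists_elim_forest G)
  | succ d ih =>
    intro V _ G
    set S := {k : ℕ | ∃ U : Set V, Nat.card ↑U ≤ k ∧
      ∀ c : (G.induce Uᶜ).ConnectedComponent,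
        vcFold (d + 1) ↑c.supp ((G.induce Uᶜ).induce c.supp) ≤ k} with hSdef
    have hfold : vcFold (d + 2) V G = sInf S := rfl
    set k := vcFold (d + 2) V G with hk
    have hne : S.Nonempty := by
      refine ⟨Nat.card V, Set.univ, le_of_eq Nat.card_univ, ?_⟩
      haveI : IsEmpty ↑((Set.univ : Set V)ᶜ) := ⟨fun x => x.2 (Set.mem_univ ↑x)⟩
      exact fun c => SimpleGraph.ConnectedComponent.ind (fun v => isEmptyElim v) c
    have hmem : k ∈ S := by rw [hfold]; exact Nat.sInf_mem hne
    obtain ⟨U, hU, hc⟩ := hmem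
    have hcomp : ∀ c : (G.induce Uᶜ).ConnectedComponent,
        ∃ F : RootedForest ↑c.supp,
          IsElimForest ((G.induce Uᶜ).induce c.supp) F ∧ forestDepth F ≤ (d + 1) * k := by
      intro c
      haveI : Fintype ↑c.supp := Fintype.ofFinite _
      have h1 := ih ↑c.supp ((G.induce Uᶜ).induce c.supp)
      have h2 : (d + 1) * vcFold (d + 1) ↑c.supp ((G.induce Uᶜ).induce c.supp)
          ≤ (d + 1) * k := Nat.mul_le_mul_left _ (hc c)
      exact exists_forest_of_td (h1.trans h2)
    obtain ⟨F', hElim, hDep⟩ := unionForest (G.induce Uᶜ) ((d + 1) * k) hcomp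
    have hglue := glueB U (Finite.equivFin ↑U) F' G ((d + 1) * k) hElim hDep
    have h3 := treedepth_le hglue
    calc treedepth G ≤ Nat.card ↑U + (d + 1) * k := h3
    _ ≤ k + (d + 1) * k := Nat.add_le_add_right hU _
    _ = (d + 1 + 1) * vcFold (d + 1 + 1) V G := by rw [← hk]; ring


end TDAux

/-- for every finite graph `G` and every `d ≥ 1`,
`td(G) ≤ d * vc_d(G)`. -/
theorem stmt2 {V : Type} [Fintype V] (G : SimpleGraph V) (d : ℕ) (hd : 1 ≤ d) :
    treedepth G ≤ d * vcFold d V G := by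
  obtain ⟨n, rfl⟩ : ∃ n, d = n + 1 := ⟨d - 1, by omega⟩
  exact TDAux.auxMain n V G
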